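/- arXiv:2211.10577 — 3 statements merged into one kernel-verified Lean document; each statement's English description precedes it below -/
import Mathlib

section
/- Let Q be an affine semigroup with underlying real cone R_{≥0}Q cut out by hyperplanes H_1,...,H_n (with positive half-spaces containing Q), and let F be a face of Q. If S is the set of indices i such that F ⊂ H_i, then the real cone generated by the localization Q - NF equals the closed cumulative region R_S = ∩_{i∈S} closure(H_i^{(+)}). -/
/-!
STATEMENT 3: Let Q be an affine semigroup with underlying real cone ℝ₊Q cut out by
hyperplanes H₁,…,Hₙ (with positive half-spaces containing Q), and let F be a face
of Q. If S is the set of indices i such that F ⊂ H_i, then the real cone generated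
by the localization Q - ℕF equals the closed cumulative region
R_S = ∩_{i∈S} closure(H_i⁺).
-/

open scoped BigOperators

noncomputable section

def IsFace {d : ℕ} (Q F : AddSubmonoid (Fin d → ℤ)) : Prop :=
  F ≤ Q ∧ ∀ a b : Fin d → ℤ, a ∈ Q → b ∈ Q → (a + b ∈ F ↔ a ∈ F ∧ b ∈ F)

def locSemigroup {d : ℕ} (Q F : AddSubmonoid (Fin d → ℤ)) : AddSubmonoid (Fin d → ℤ) where
  carrier := {x | ∃ q ∈ Q, ∃ f ∈ F, x = q - f}
  zero_mem' := ⟨0, Q.zero_mem, 0, F.zero_mem, by simp⟩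
  add_mem' := by
    rintro a b ⟨q1, hq1, f1, hf1, rfl⟩ ⟨q2, hq2, f2, hf2, rfl⟩
    exact ⟨q1 + q2, Q.add_mem hq1 hq2, f1 + f2, F.add_mem hf1 hf2, by abel⟩

def dotR {d : ℕ} (c x : Fin d → ℝ) : ℝ := ∑ i, c i * x i

/-- The coercion `ℤ^d → ℝ^d`. -/
def castR {d : ℕ} (v : Fin d → ℤ) : Fin d → ℝ := fun i => (v i : ℝ)

/-- The real cone generated by a set `S ⊆ ℤ^d`: all nonnegative real combinations
of elements of `S`. -/
def realCone {d : ℕ} (S : Set (Fin d → ℤ)) : Set (Fin d → ℝ) :=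
  {x | ∃ (t : Finset (Fin d → ℤ)) (c : (Fin d → ℤ) → ℝ),
    (t : Set (Fin d → ℤ)) ⊆ S ∧ (∀ v ∈ t, 0 ≤ c v) ∧ x = ∑ v ∈ t, c v • castR v}


def castRHom {d : ℕ} : (Fin d → ℤ) →+ (Fin d → ℝ) where
  toFun := castR
  map_zero' := by funext i; simp [castR]
  map_add' a b := by funext i; simp [castR]

def dotRHom {d : ℕ} (c : Fin d → ℝ) : (Fin d → ℝ) →+ ℝ where
  toFun := dotR c
  map_zero' := by simp [dotR]
  map_add' a b := by simp [dotR, mul_add, Finset.sum_add_distrib]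

lemma castR_neg {d : ℕ} (v : Fin d → ℤ) : castR (-v) = -castR v := by
  funext i; simp [castR]

lemma dotR_add {d : ℕ} (c x y : Fin d → ℝ) : dotR c (x + y) = dotR c x + dotR c y :=
  (dotRHom c).map_add x y

lemma dotR_smul {d : ℕ} (c : Fin d → ℝ) (r : ℝ) (x : Fin d → ℝ) :
    dotR c (r • x) = r * dotR c x := by
  simp [dotR, Finset.mul_sum, mul_left_comm]

lemma realCone_zero {d : ℕ} (S : Set (Fin d → ℤ)) : (0 : Fin d → ℝ) ∈ realCone S :=
  ⟨∅, fun _ => 0, by simp, by simp, by simp⟩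

lemma mem_realCone_of_mem {d : ℕ} {S : Set (Fin d → ℤ)} {v : Fin d → ℤ} (hv : v ∈ S) :
    castR v ∈ realCone S :=
  ⟨{v}, fun _ => 1, by simpa using hv, fun _ _ => zero_le_one, by simp⟩

lemma realCone_mono {d : ℕ} {S T : Set (Fin d → ℤ)} (h : S ⊆ T) :
    realCone S ⊆ realCone T := by
  rintro x ⟨t, co, hsub, hnn, rfl⟩
  exact ⟨t, co, hsub.trans h, hnn, rfl⟩

lemma realCone_add {d : ℕ} {S : Set (Fin d → ℤ)} {x y : Fin d → ℝ}
    (hx : x ∈ realCone S) (hy : y ∈ realCone S) : x + y ∈ realCone S := by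
  obtain ⟨t1, c1, hs1, hn1, rfl⟩ := hx
  obtain ⟨t2, c2, hs2, hn2, rfl⟩ := hy
  refine ⟨t1 ∪ t2, fun v => (if v ∈ t1 then c1 v else 0) + (if v ∈ t2 then c2 v else 0),
    ?_, ?_, ?_⟩
  · intro v hv
    rcases Finset.mem_union.mp hv with h | h
    · exact hs1 h
    · exact hs2 h
  · intro v _
    have h1 : (0:ℝ) ≤ if v ∈ t1 then c1 v else 0 := by
      split <;> simp_all [hn1]
    have h2 : (0:ℝ) ≤ if v ∈ t2 then c2 v else 0 := by
      split <;> simp_all [hn2]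
    exact add_nonneg h1 h2
  · have e1 : ∑ v ∈ t1 ∪ t2, (if v ∈ t1 then c1 v else 0) • castR v
        = ∑ v ∈ t1, c1 v • castR v := by
      simp only [ite_smul, zero_smul]
      rw [Finset.sum_ite_mem, Finset.union_inter_cancel_left]
    have e2 : ∑ v ∈ t1 ∪ t2, (if v ∈ t2 then c2 v else 0) • castR v
        = ∑ v ∈ t2, c2 v • castR v := by
      simp only [ite_smul, zero_smul]
      rw [Finset.sum_ite_mem, Finset.union_inter_cancel_right]
    simp only [add_smul, Finset.sum_add_distrib]
    rw [e1, e2]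

lemma realCone_smul {d : ℕ} {S : Set (Fin d → ℤ)} {x : Fin d → ℝ} {r : ℝ}
    (hr : 0 ≤ r) (hx : x ∈ realCone S) : r • x ∈ realCone S := by
  obtain ⟨t, co, hs, hn, rfl⟩ := hx
  refine ⟨t, fun v => r * co v, hs, fun v hv => mul_nonneg hr (hn v hv), ?_⟩
  rw [Finset.smul_sum]
  exact Finset.sum_congr rfl fun v _ => (mul_smul r (co v) (castR v)).symm

theorem real_cone_of_localization_is_cumulative_region
    {d n : ℕ} (A : Finset (Fin d → ℤ)) (h0 : (0 : Fin d → ℤ) ∉ A)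
    (Q : AddSubmonoid (Fin d → ℤ)) (hQ : Q = AddSubmonoid.closure (A : Set (Fin d → ℤ)))
    -- the H-representation of the cone ℝ₊Q by the linear hyperplane arrangement
    (c : Fin n → Fin d → ℝ) (hc : ∀ i, c i ≠ 0)
    (hrep : realCone (A : Set (Fin d → ℤ)) = ⋂ i : Fin n, {x | 0 ≤ dotR (c i) x})
    -- F a face of Q
    (F : AddSubmonoid (Fin d → ℤ)) (hF : IsFace Q F) :
    -- the real cone of Q - ℕF equals the cumulative region R_S, where
    -- S = { i | F ⊆ H_i } is the set of indices of hyperplanes containing F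
    realCone ((locSemigroup Q F : Set (Fin d → ℤ)))
      = ⋂ i ∈ {i : Fin n | ∀ v ∈ F, dotR (c i) (castR v) = 0}, {x | 0 ≤ dotR (c i) x} := by
  have hQcone : ∀ q ∈ Q, castR q ∈ realCone (A : Set (Fin d → ℤ)) := by
    intro q hq
    rw [hQ] at hq
    refine AddSubmonoid.closure_induction (fun a ha => mem_realCone_of_mem ha)
      ?_ (fun a b _ _ ha hb => ?_) hq
    · rw [show castR (0 : Fin d → ℤ) = 0 from castRHom.map_zero]
      exact realCone_zero _
    · rw [show castR (a + b) = castR a + castR b from castRHom.map_add a b]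
      exact realCone_add ha hb
  have hQnn : ∀ q ∈ Q, ∀ i, 0 ≤ dotR (c i) (castR q) := by
    intro q hq i
    have h := hQcone q hq
    rw [hrep] at h
    exact Set.mem_iInter.mp h i
  apply Set.Subset.antisymm
  · -- forward inclusion
    rintro x ⟨t, co, hsub, hnn, rfl⟩
    simp only [Set.mem_iInter, Set.mem_setOf_eq]
    intro i hi
    have hsum : dotR (c i) (∑ v ∈ t, co v • castR v)
        = ∑ v ∈ t, co v * dotR (c i) (castR v) := by
      rw [show dotR (c i) (∑ v ∈ t, co v • castR v)
          = dotRHom (c i) (∑ v ∈ t, co v • castR v) from rfl, map_sum]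
      exact Finset.sum_congr rfl fun v _ => dotR_smul _ _ _
    rw [hsum]
    apply Finset.sum_nonneg
    intro v hv
    obtain ⟨q, hq, f, hf, rfl⟩ := hsub hv
    have h1 : dotR (c i) (castR (q - f)) = dotR (c i) (castR q) - dotR (c i) (castR f) := by
      rw [show castR (q - f) = castR q - castR f from castRHom.map_sub q f]
      exact (dotRHom (c i)).map_sub _ _
    refine mul_nonneg (hnn _ hv) ?_
    rw [h1, hi f hf, sub_zero]
    exact hQnn q hq i
  · -- reverse inclusion
    intro x hx
    simp only [Set.mem_iInter, Set.mem_setOf_eq] at hx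
    have hex : ∀ i : Fin n, ∃ v, v ∈ F ∧
        (¬(∀ w ∈ F, dotR (c i) (castR w) = 0) → dotR (c i) (castR v) ≠ 0) := by
      intro i
      by_cases hi : ∀ w ∈ F, dotR (c i) (castR w) = 0
      · exact ⟨0, F.zero_mem, fun h => absurd hi h⟩
      · push_neg at hi
        obtain ⟨v, hvF, hv⟩ := hi
        exact ⟨v, hvF, fun _ => hv⟩
    choose g hgF hg using hex
    set f : Fin d → ℤ := ∑ i : Fin n, g i with hfdef
    have hfF : f ∈ F := F.sum_mem fun i _ => hgF i
    have hcast : castR f = ∑ i : Fin n, castR (g i) := by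
      rw [hfdef]
      exact map_sum castRHom g Finset.univ
    have hkey : ∀ i : Fin n, ¬(∀ w ∈ F, dotR (c i) (castR w) = 0) →
        0 < dotR (c i) (castR f) := by
      intro i hi
      have hs : dotR (c i) (castR f) = ∑ j : Fin n, dotR (c i) (castR (g j)) := by
        rw [hcast]
        exact map_sum (dotRHom (c i)) _ Finset.univ
      rw [hs]
      refine Finset.sum_pos' (fun j _ => hQnn (g j) (hF.1 (hgF j)) i) ?_
      exact ⟨i, Finset.mem_univ i,
        lt_of_le_of_ne (hQnn (g i) (hF.1 (hgF i)) i) (Ne.symm (hg i hi))⟩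
    obtain ⟨M, hM⟩ :=
      (Finset.univ.image fun i : Fin n => (-(dotR (c i) x)) / dotR (c i) (castR f)).exists_le
    set N : ℝ := max M 0 with hNdef
    have hN0 : (0 : ℝ) ≤ N := le_max_right _ _
    have hMN : M ≤ N := le_max_left _ _
    have hy : x + N • castR f ∈ realCone (A : Set (Fin d → ℤ)) := by
      rw [hrep]
      refine Set.mem_iInter.mpr fun i => ?_
      show 0 ≤ dotR (c i) (x + N • castR f)
      rw [dotR_add, dotR_smul]
      by_cases hi : ∀ w ∈ F, dotR (c i) (castR w) = 0
      · rw [hi f hfF, mul_zero, add_zero]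
        exact hx i hi
      · have hk := hkey i hi
        have hb : (-(dotR (c i) x)) / dotR (c i) (castR f) ≤ N :=
          le_trans (hM _ (Finset.mem_image_of_mem _ (Finset.mem_univ i))) hMN
        have hmul := mul_le_mul_of_nonneg_right hb (le_of_lt hk)
        rw [div_mul_cancel₀ _ (ne_of_gt hk)] at hmul
        linarith
    have hAloc : (A : Set (Fin d → ℤ)) ⊆ (locSemigroup Q F : Set (Fin d → ℤ)) := by
      intro a ha
      exact ⟨a, hQ ▸ AddSubmonoid.subset_closure ha, 0, F.zero_mem, by simp⟩
    have hnegf : (-f) ∈ (locSemigroup Q F : Set (Fin d → ℤ)) :=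
      ⟨0, Q.zero_mem, f, hfF, by simp⟩
    have h1 : x + N • castR f ∈ realCone (locSemigroup Q F : Set (Fin d → ℤ)) :=
      realCone_mono hAloc hy
    have h2 : N • castR (-f) ∈ realCone (locSemigroup Q F : Set (Fin d → ℤ)) :=
      realCone_smul hN0 (mem_realCone_of_mem hnegf)
    have hadd := realCone_add h1 h2
    have heq : (x + N • castR f) + N • castR (-f) = x := by
      rw [castR_neg, smul_neg]
      abel
    rwa [heq] at hadd

end
end

section
/- The set of holes of an affine semigroup Q, i.e. (ZQ ∩ R_{≥0}Q) \ Q, is a finite union of translates of faces of Q, that is, a finite union of sets of the form a + NF with F a face of Q. -/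
open scoped BigOperators

noncomputable section

def transSet {d : ℕ} (a : Fin d → ℤ) (F : AddSubmonoid (Fin d → ℤ)) : Set (Fin d → ℤ) :=
  {x | ∃ f ∈ F, x = a + f}

/-!
Write `Q = ℕA`. An element `x = ∑ cᵥ v` of `ℤQ ∩ ℝ≥0 Q` splits as `x = p + q` with
`q = ∑ ⌊cᵥ⌋ v ∈ Q` and `p = ∑ (cᵥ - ⌊cᵥ⌋) v` of norm at most `∑ ‖v‖`. Only finitely many lattice
points `p` are that short, so the holes are the finite union of the sets `p + (Q \ (Q : p))`,
where `(Q : p) = {q ∈ Q | p + q ∈ Q}` is an ideal of `Q`.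

By Dickson's lemma the ideals of `Q` satisfy the ascending chain condition, and Noetherian
induction shows that `Q \ J` is a finite union of translates of faces for every ideal `J`:
if `b ∈ Q \ J` has a maximal colon ideal `(J : b)`, then `F = {g ∈ Q | b + g ∉ J}` is a face, and
`Q \ J = (b + F) ∪ (Q \ (J ∪ (b + Q)))` with `J ∪ (b + Q)` strictly larger than `J`.
-/

section MonoidIdeal

variable {M : Type*} [AddCommMonoid M] {Q : AddSubmonoid M} {J K : Set M}

def IsMonoidIdeal (Q : AddSubmonoid M) (J : Set M) : Prop :=
  J ⊆ Q ∧ ∀ x ∈ J, ∀ q ∈ Q, x + q ∈ J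

abbrev MonoidIdeal (Q : AddSubmonoid M) := {J : Set M // IsMonoidIdeal Q J}

def colon (Q : AddSubmonoid M) (J : Set M) (b : M) : Set M :=
  {q | q ∈ Q ∧ b + q ∈ J}

lemma isMonoidIdeal_self (Q : AddSubmonoid M) : IsMonoidIdeal Q Q :=
  ⟨subset_rfl, fun _ hx _ hq => Q.add_mem hx hq⟩

lemma IsMonoidIdeal.union (hJ : IsMonoidIdeal Q J) (hK : IsMonoidIdeal Q K) :
    IsMonoidIdeal Q (J ∪ K) :=
  ⟨Set.union_subset hJ.1 hK.1, fun x hx q hq => hx.imp (hJ.2 x · q hq) (hK.2 x · q hq)⟩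

lemma IsMonoidIdeal.colon (hJ : IsMonoidIdeal Q J) (b : M) :
    IsMonoidIdeal Q (_root_.colon Q J b) :=
  ⟨fun _ hq => hq.1, fun x hx q hq =>
    ⟨Q.add_mem hx.1 hq, by rw [← add_assoc]; exact hJ.2 _ hx.2 q hq⟩⟩

lemma IsMonoidIdeal.colon_subset_colon_add (hJ : IsMonoidIdeal Q J) (b : M) {x : M}
    (hx : x ∈ Q) : _root_.colon Q J b ⊆ _root_.colon Q J (b + x) :=
  fun q hq => ⟨hq.1, by rw [add_right_comm]; exact hJ.2 _ hq.2 x hx⟩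

/-- Dickson's lemma, transported from `ℕ^A` to `ℕA`. -/
lemma exists_lt_eq_add_of_mem_closure (A : Finset M) (f : ℕ → M)
    (hf : ∀ n, f n ∈ AddSubmonoid.closure (A : Set M)) :
    ∃ m n, m < n ∧ ∃ q ∈ AddSubmonoid.closure (A : Set M), f n = f m + q := by
  choose c hc using fun n => AddSubmonoid.mem_closure_finset'.1 (hf n)
  obtain ⟨m, n, hmn, hle⟩ := wellQuasiOrdered_le c
  refine ⟨m, n, hmn, ∑ i, (c n i - c m i) • i.1,
    sum_mem fun i _ => nsmul_mem (AddSubmonoid.subset_closure i.2) _, ?_⟩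
  rw [hc m, hc n, ← Finset.sum_add_distrib]
  exact Finset.sum_congr rfl fun i _ => by rw [← add_smul, Nat.add_sub_cancel' (hle i)]

instance wellFoundedGT_monoidIdeal_closure (A : Finset M) :
    WellFoundedGT (MonoidIdeal (AddSubmonoid.closure (A : Set M))) := by
  refine ⟨RelEmbedding.wellFounded_iff_isEmpty.2 ⟨fun J => ?_⟩⟩
  have hJ : StrictMono J := fun m n h => J.map_rel_iff.2 h
  choose x hx hx' using fun n => Set.exists_of_ssubset (hJ (Nat.lt_succ_self n))
  obtain ⟨m, n, hmn, q, hq, hxn⟩ :=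
    exists_lt_eq_add_of_mem_closure A x fun n => (J (n + 1)).2.1 (hx n)
  exact hx' n (hxn ▸ (J n).2.2 _ (hJ.monotone hmn (hx m)) q hq)

end MonoidIdeal

section Faces

variable {d : ℕ} {Q : AddSubmonoid (Fin d → ℤ)}

def IsFiniteUnionOfFaceTranslates (Q : AddSubmonoid (Fin d → ℤ)) (X : Set (Fin d → ℤ)) :
    Prop :=
  ∃ S : Set ((Fin d → ℤ) × AddSubmonoid (Fin d → ℤ)),
    S.Finite ∧ (∀ p ∈ S, IsFace Q p.2) ∧ X = ⋃ p ∈ S, transSet p.1 p.2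

lemma image_add_transSet (a b : Fin d → ℤ) (F : AddSubmonoid (Fin d → ℤ)) :
    (a + ·) '' transSet b F = transSet (a + b) F := by
  ext x
  simp only [transSet, Set.mem_image, Set.mem_ofPred_eq]
  constructor
  · rintro ⟨_, ⟨f, hf, rfl⟩, rfl⟩
    exact ⟨f, hf, (add_assoc a b f).symm⟩
  · rintro ⟨f, hf, rfl⟩
    exact ⟨b + f, ⟨f, hf, rfl⟩, (add_assoc a b f).symm⟩

namespace IsFiniteUnionOfFaceTranslates

variable {X Y : Set (Fin d → ℤ)}

lemma empty : IsFiniteUnionOfFaceTranslates Q ∅ :=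
  ⟨∅, Set.finite_empty, by simp, by simp⟩

lemma transSet {F : AddSubmonoid (Fin d → ℤ)} (hF : IsFace Q F) (a : Fin d → ℤ) :
    IsFiniteUnionOfFaceTranslates Q (transSet a F) :=
  ⟨{(a, F)}, Set.finite_singleton _, by simpa using hF, by simp⟩

lemma union (hX : IsFiniteUnionOfFaceTranslates Q X) (hY : IsFiniteUnionOfFaceTranslates Q Y) :
    IsFiniteUnionOfFaceTranslates Q (X ∪ Y) := by
  obtain ⟨S, hS, hSF, rfl⟩ := hX
  obtain ⟨T, hT, hTF, rfl⟩ := hY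
  exact ⟨S ∪ T, hS.union hT, fun p hp => hp.elim (hSF p) (hTF p),
    (Set.biUnion_union S T _).symm⟩

lemma biUnion {ι : Type*} {P : Set ι} (hP : P.Finite) {X : ι → Set (Fin d → ℤ)}
    (hX : ∀ i ∈ P, IsFiniteUnionOfFaceTranslates Q (X i)) :
    IsFiniteUnionOfFaceTranslates Q (⋃ i ∈ P, X i) := by
  choose! S hS hSF hX using hX
  refine ⟨⋃ i ∈ P, S i, hP.biUnion hS, ?_, ?_⟩
  · simp only [Set.mem_iUnion]
    rintro p ⟨i, hi, hp⟩
    exact hSF i hi p hp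
  · ext x
    simp +contextual [hX]

lemma image_add (hX : IsFiniteUnionOfFaceTranslates Q X) (a : Fin d → ℤ) :
    IsFiniteUnionOfFaceTranslates Q ((a + ·) '' X) := by
  obtain ⟨S, hS, hSF, rfl⟩ := hX
  refine ⟨(fun p => (a + p.1, p.2)) '' S, hS.image _, ?_, ?_⟩
  · rintro _ ⟨p, hp, rfl⟩
    exact hSF p hp
  · simp only [Set.image_iUnion₂, Set.biUnion_image, image_add_transSet]

end IsFiniteUnionOfFaceTranslates

lemma isMonoidIdeal_transSet {b : Fin d → ℤ} (hb : b ∈ Q) : IsMonoidIdeal Q (transSet b Q) :=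
  ⟨fun _ ⟨g, hg, hx⟩ => hx ▸ Q.add_mem hb hg, fun _ ⟨g, hg, hx⟩ q hq =>
    ⟨g + q, Q.add_mem hg hq, by rw [hx, add_assoc]⟩⟩

/-- Maximality of `(J : b)` is what makes `{g ∈ Q | b + g ∉ J}` closed under addition. -/
lemma exists_isFace_of_maximal_colon {J : Set (Fin d → ℤ)} (hJ : IsMonoidIdeal Q J)
    {b : Fin d → ℤ} (hbJ : b ∉ J)
    (hmax : ∀ x ∈ Q, b + x ∉ J → colon Q J (b + x) ⊆ colon Q J b) :
    ∃ F : AddSubmonoid (Fin d → ℤ),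
      IsFace Q F ∧ (F : Set (Fin d → ℤ)) = {g | g ∈ Q ∧ b + g ∉ J} := by
  have add_mem {x y} (hx : x ∈ Q) (hbx : b + x ∉ J) (hy : y ∈ Q) (hby : b + y ∉ J) :
      b + (x + y) ∉ J := fun hbxy =>
    hby (hmax x hx hbx ⟨hy, by rwa [← add_assoc] at hbxy⟩).2
  refine ⟨{ carrier := {g | g ∈ Q ∧ b + g ∉ J}
            zero_mem' := ⟨Q.zero_mem, by simpa using hbJ⟩
            add_mem' := fun hx hy => ⟨Q.add_mem hx.1 hy.1, add_mem hx.1 hx.2 hy.1 hy.2⟩ },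
    ⟨fun _ hg => hg.1, fun u v hu hv => ⟨fun huv => ?_,
      fun h => ⟨Q.add_mem hu hv, add_mem hu h.1.2 hv h.2.2⟩⟩⟩, rfl⟩
  refine ⟨⟨hu, fun hbu => huv.2 ?_⟩, ⟨hv, fun hbv => huv.2 ?_⟩⟩
  · rw [← add_assoc]; exact hJ.2 _ hbu v hv
  · rw [add_comm u, ← add_assoc]; exact hJ.2 _ hbv u hu

lemma sdiff_eq_transSet_union_sdiff {J : Set (Fin d → ℤ)} {b : Fin d → ℤ} (hb : b ∈ Q)
    {F : AddSubmonoid (Fin d → ℤ)} (hF : (F : Set (Fin d → ℤ)) = {g | g ∈ Q ∧ b + g ∉ J}) :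
    (Q : Set (Fin d → ℤ)) \ J =
      transSet b F ∪ ((Q : Set (Fin d → ℤ)) \ (J ∪ transSet b Q)) := by
  have hmemF (g) : g ∈ F ↔ g ∈ Q ∧ b + g ∉ J := Set.ext_iff.mp hF g
  ext z
  constructor
  · rintro ⟨hzQ, hzJ⟩
    by_cases hzb : z ∈ transSet b Q
    · obtain ⟨g, hg, rfl⟩ := hzb
      exact Or.inl ⟨g, (hmemF g).2 ⟨hg, hzJ⟩, rfl⟩
    · exact Or.inr ⟨hzQ, fun h => h.elim hzJ hzb⟩
  · rintro (⟨g, hg, rfl⟩ | ⟨hzQ, hzJ⟩)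
    · have hg' := (hmemF g).1 hg
      exact ⟨Q.add_mem hb hg'.1, hg'.2⟩
    · exact ⟨hzQ, fun h => hzJ (Or.inl h)⟩

theorem isFiniteUnionOfFaceTranslates_sdiff [WellFoundedGT (MonoidIdeal Q)]
    (J : MonoidIdeal Q) :
    IsFiniteUnionOfFaceTranslates Q ((Q : Set (Fin d → ℤ)) \ J.1) := by
  induction J using WellFoundedGT.induction with
  | _ J ih =>
  obtain ⟨J, hJ : IsMonoidIdeal Q J⟩ := J
  rcases ((Q : Set (Fin d → ℤ)) \ J).eq_empty_or_nonempty with hempty | hne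
  · rw [hempty]; exact .empty
  obtain ⟨b, ⟨hbQ, hbJ⟩, hmax⟩ :=
    exists_maximalFor_of_wellFoundedGT (· ∈ (Q : Set (Fin d → ℤ)) \ J)
      (fun b => (⟨colon Q J b, hJ.colon b⟩ : MonoidIdeal Q)) hne
  obtain ⟨F, hF, hFeq⟩ := exists_isFace_of_maximal_colon hJ hbJ fun x hx hbx =>
    hmax ⟨Q.add_mem hbQ hx, hbx⟩ (hJ.colon_subset_colon_add b hx)
  have hlt : (⟨J, hJ⟩ : MonoidIdeal Q) < ⟨_, hJ.union (isMonoidIdeal_transSet hbQ)⟩ :=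
    ⟨Set.subset_union_left, fun h => hbJ (h (Or.inr ⟨0, Q.zero_mem, (add_zero b).symm⟩))⟩
  rw [sdiff_eq_transSet_union_sdiff hbQ hFeq]
  exact (IsFiniteUnionOfFaceTranslates.transSet hF b).union (ih _ hlt)

end Faces

section Holes

variable {d : ℕ}

def holes (A : Finset (Fin d → ℤ)) : Set (Fin d → ℤ) :=
  {v | v ∈ AddSubgroup.closure (A : Set (Fin d → ℤ)) ∧
    castR v ∈ realCone (A : Set (Fin d → ℤ)) ∧ v ∉ AddSubmonoid.closure (A : Set (Fin d → ℤ))}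

lemma castR_add (x y : Fin d → ℤ) : castR (x + y) = castR x + castR y := by
  ext; simp [castR]

lemma castR_sub (x y : Fin d → ℤ) : castR (x - y) = castR x - castR y := by
  ext; simp [castR]

lemma castR_sum_nsmul (A : Finset (Fin d → ℤ)) (n : (Fin d → ℤ) → ℕ) :
    castR (∑ v ∈ A, n v • v) = ∑ v ∈ A, (n v : ℝ) • castR v := by
  ext; simp [castR, Finset.sum_apply]

lemma norm_castR (v : Fin d → ℤ) : ‖castR v‖ = ‖v‖ := by
  simp only [castR, Pi.norm_def]
  congr 2

lemma mem_realCone_finset_iff {A : Finset (Fin d → ℤ)} {x : Fin d → ℝ} :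
    x ∈ realCone (A : Set (Fin d → ℤ)) ↔
      ∃ c : (Fin d → ℤ) → ℝ, 0 ≤ c ∧ x = ∑ v ∈ A, c v • castR v := by
  constructor
  · rintro ⟨t, c, htA, hc, rfl⟩
    refine ⟨(t : Set (Fin d → ℤ)).indicator c, fun v => Set.indicator_nonneg hc v, ?_⟩
    simp_rw [← Set.indicator_smul_apply_left]
    exact (Finset.sum_indicator_subset _ (Finset.coe_subset.1 htA)).symm
  · rintro ⟨c, hc, rfl⟩
    exact ⟨A, c, subset_rfl, fun v _ => hc v, rfl⟩

lemma add_mem_realCone {A : Finset (Fin d → ℤ)} {x y : Fin d → ℝ}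
    (hx : x ∈ realCone (A : Set (Fin d → ℤ))) (hy : y ∈ realCone (A : Set (Fin d → ℤ))) :
    x + y ∈ realCone (A : Set (Fin d → ℤ)) := by
  obtain ⟨c, hc, rfl⟩ := mem_realCone_finset_iff.1 hx
  obtain ⟨c', hc', rfl⟩ := mem_realCone_finset_iff.1 hy
  exact mem_realCone_finset_iff.2 ⟨c + c', add_nonneg hc hc', by
    simp only [Pi.add_apply, add_smul, Finset.sum_add_distrib]⟩

lemma castR_mem_realCone {A : Finset (Fin d → ℤ)} {x : Fin d → ℤ}
    (hx : x ∈ AddSubmonoid.closure (A : Set (Fin d → ℤ))) :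
    castR x ∈ realCone (A : Set (Fin d → ℤ)) := by
  obtain ⟨n, -, rfl⟩ := AddSubmonoid.mem_closure_finset.1 hx
  exact mem_realCone_finset_iff.2 ⟨fun v => n v, fun v => Nat.cast_nonneg _, castR_sum_nsmul A n⟩

/-- Subtracting the integer parts of the cone coefficients of `x`. -/
lemma exists_sub_mem_realCone_norm_le {A : Finset (Fin d → ℤ)} {x : Fin d → ℤ}
    (hx : castR x ∈ realCone (A : Set (Fin d → ℤ))) :
    ∃ q ∈ AddSubmonoid.closure (A : Set (Fin d → ℤ)),
      castR (x - q) ∈ realCone (A : Set (Fin d → ℤ)) ∧ ‖x - q‖ ≤ ∑ v ∈ A, ‖v‖ := by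
  obtain ⟨c, hc, hxc⟩ := mem_realCone_finset_iff.1 hx
  have hfrac : castR (x - ∑ v ∈ A, ⌊c v⌋₊ • v) = ∑ v ∈ A, (c v - ⌊c v⌋₊) • castR v := by
    simp only [castR_sub, castR_sum_nsmul, hxc, sub_smul, Finset.sum_sub_distrib]
  refine ⟨_, sum_mem fun v hv => nsmul_mem (AddSubmonoid.subset_closure hv) _,
    mem_realCone_finset_iff.2 ⟨_, fun v => sub_nonneg.2 (Nat.floor_le (hc v)), hfrac⟩, ?_⟩
  calc ‖x - ∑ v ∈ A, ⌊c v⌋₊ • v‖ = ‖∑ v ∈ A, (c v - ⌊c v⌋₊) • castR v‖ := by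
        rw [← hfrac, norm_castR]
    _ ≤ ∑ v ∈ A, ‖(c v - ⌊c v⌋₊) • castR v‖ := norm_sum_le _ _
    _ ≤ ∑ v ∈ A, ‖v‖ := Finset.sum_le_sum fun v _ => by
        rw [norm_smul, norm_castR, Real.norm_of_nonneg (sub_nonneg.2 (Nat.floor_le (hc v)))]
        exact mul_le_of_le_one_left (norm_nonneg v)
          (by linarith [Nat.lt_floor_add_one (c v)])

def shortConePoints (A : Finset (Fin d → ℤ)) : Set (Fin d → ℤ) :=
  {p | p ∈ AddSubgroup.closure (A : Set (Fin d → ℤ)) ∧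
    castR p ∈ realCone (A : Set (Fin d → ℤ)) ∧ ‖p‖ ≤ ∑ v ∈ A, ‖v‖}

lemma shortConePoints_finite (A : Finset (Fin d → ℤ)) : (shortConePoints A).Finite :=
  (isCompact_closedBall (0 : Fin d → ℤ) _).finite_of_discrete.subset
    fun _ hp => mem_closedBall_zero_iff.2 hp.2.2

lemma holes_eq_biUnion (A : Finset (Fin d → ℤ)) :
    holes A = ⋃ p ∈ shortConePoints A, (p + ·) ''
      ((AddSubmonoid.closure (A : Set (Fin d → ℤ)) : Set (Fin d → ℤ)) \
        colon (AddSubmonoid.closure (A : Set (Fin d → ℤ)))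
          (AddSubmonoid.closure (A : Set (Fin d → ℤ))) p) := by
  set Q := AddSubmonoid.closure (A : Set (Fin d → ℤ))
  have hQG : ∀ {q}, q ∈ Q → q ∈ AddSubgroup.closure (A : Set (Fin d → ℤ)) :=
    fun hq => AddSubmonoid.closure_le.2 (fun _ hv => AddSubgroup.subset_closure hv) hq
  ext x
  simp only [holes, shortConePoints, Set.mem_ofPred_eq, Set.mem_iUnion, Set.mem_image, exists_prop]
  constructor
  · rintro ⟨hxG, hxC, hxQ⟩
    obtain ⟨q, hq, hpC, hp⟩ := exists_sub_mem_realCone_norm_le hxC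
    exact ⟨x - q, ⟨sub_mem hxG (hQG hq), hpC, hp⟩, q, ⟨hq, fun h => hxQ (by simpa using h.2)⟩,
      sub_add_cancel x q⟩
  · rintro ⟨p, ⟨hpG, hpC, -⟩, q, ⟨hq, hpq⟩, rfl⟩
    exact ⟨add_mem hpG (hQG hq), castR_add p q ▸ add_mem_realCone hpC (castR_mem_realCone hq),
      fun h => hpq ⟨hq, h⟩⟩

theorem isFiniteUnionOfFaceTranslates_holes (A : Finset (Fin d → ℤ)) :
    IsFiniteUnionOfFaceTranslates (AddSubmonoid.closure (A : Set (Fin d → ℤ))) (holes A) := by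
  rw [holes_eq_biUnion]
  exact .biUnion (shortConePoints_finite A) fun p _ => .image_add
    (isFiniteUnionOfFaceTranslates_sdiff ⟨_, (isMonoidIdeal_self _).colon p⟩) p

end Holes

theorem holes_are_finite_union_of_translates_of_faces_general
    {d : ℕ} (A : Finset (Fin d → ℤ)) :
    ∃ (n : ℕ) (a : Fin n → (Fin d → ℤ)) (Fs : Fin n → AddSubmonoid (Fin d → ℤ)),
      (∀ i, IsFace (AddSubmonoid.closure (A : Set (Fin d → ℤ))) (Fs i)) ∧
      -- the set of holes (ℤQ ∩ ℝ₊Q) \ Q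
      {v : Fin d → ℤ | v ∈ AddSubgroup.closure (A : Set (Fin d → ℤ)) ∧
          castR v ∈ realCone (A : Set (Fin d → ℤ)) ∧
          v ∉ AddSubmonoid.closure (A : Set (Fin d → ℤ))}
        = ⋃ i, transSet (a i) (Fs i) := by
  obtain ⟨S, hS, hSF, hholes⟩ := isFiniteUnionOfFaceTranslates_holes A
  have := hS.to_subtype
  obtain ⟨n, ⟨e⟩⟩ := Finite.exists_equiv_fin S
  refine ⟨n, fun i => (e.symm i).1.1, fun i => (e.symm i).1.2, fun i => hSF _ (e.symm i).2, ?_⟩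
  rw [← holes, hholes, Set.biUnion_eq_iUnion]
  exact (e.symm.surjective.iUnion_comp fun p : S => transSet p.1.1 p.1.2).symm

theorem holes_are_finite_union_of_translates_of_faces
    {d : ℕ} (A : Finset (Fin d → ℤ)) (h0 : (0 : Fin d → ℤ) ∉ A) :
    ∃ (n : ℕ) (a : Fin n → (Fin d → ℤ)) (Fs : Fin n → AddSubmonoid (Fin d → ℤ)),
      (∀ i, IsFace (AddSubmonoid.closure (A : Set (Fin d → ℤ))) (Fs i)) ∧
      -- the set of holes (ℤQ ∩ ℝ₊Q) \ Q
      {v : Fin d → ℤ | v ∈ AddSubgroup.closure (A : Set (Fin d → ℤ)) ∧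
          castR v ∈ realCone (A : Set (Fin d → ℤ)) ∧
          v ∉ AddSubmonoid.closure (A : Set (Fin d → ℤ))}
        = ⋃ i, transSet (a i) (Fs i) :=
  holes_are_finite_union_of_translates_of_faces_general A

end
end

section
/- For faces F ⊆ G of an affine semigroup Q, the assignment sending a face NG' of the localized semigroup Q - NF to N(G' ∩ A) and the assignment sending a face NG ⊇ NF of Q to NG - NF are mutually inverse bijections between the face lattice of Q - NF and the set of faces of Q containing F. -/
/-!
Every face `G'` of `Q - ℕF` contains `F` together with its negatives, since a face contains
every unit of the ambient monoid. Hence `G' ∩ Q` is a face of `Q` containing `F` with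
`(G' ∩ Q) - ℕF = G'`, and it is generated by `G' ∩ A` because a face of `ℕA` is generated
by the generators it contains. Conversely, for a face `G ⊇ F` of `Q` an element `q - f` of
`Q - ℕF` lies in `G - ℕF` iff `q` lies in `G`, which makes `G - ℕF` a face with
`(G - ℕF) ∩ Q = G`.
-/

open scoped BigOperators

noncomputable section

section Faces

variable {d : ℕ} {A : Set (Fin d → ℤ)} {L Q F G G' : AddSubmonoid (Fin d → ℤ)}

lemma IsFace.closure_inter_eq (hG : IsFace (AddSubmonoid.closure A) G) :
    AddSubmonoid.closure ((G : Set _) ∩ A) = G := by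
  refine le_antisymm (AddSubmonoid.closure_le.mpr fun _ hx => hx.1) fun g hg => ?_
  have hgA : g ∈ AddSubmonoid.closure A := hG.1 hg
  induction hgA using AddSubmonoid.closure_induction with
  | mem a ha => exact AddSubmonoid.subset_closure ⟨hg, ha⟩
  | zero => exact zero_mem _
  | add x y hx hy ihx ihy =>
    have hxy := (hG.2 x y hx hy).mp hg
    exact add_mem (ihx hxy.1) (ihy hxy.2)

lemma IsFace.inf_of_le (hG' : IsFace L G') (hQL : Q ≤ L) : IsFace Q (Q ⊓ G') := by
  refine ⟨inf_le_left, fun a b ha hb => ?_⟩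
  simp only [AddSubmonoid.mem_inf, ha, hb, Q.add_mem ha hb, true_and]
  exact hG'.2 a b (hQL ha) (hQL hb)

lemma IsFace.closure_inter_eq_inf (hG' : IsFace L G') (hAL : AddSubmonoid.closure A ≤ L) :
    AddSubmonoid.closure ((G' : Set _) ∩ A) = AddSubmonoid.closure A ⊓ G' := by
  have hA : ((AddSubmonoid.closure A ⊓ G' : AddSubmonoid _) : Set _) ∩ A = (G' : Set _) ∩ A := by
    ext x
    exact ⟨fun ⟨hx, hxA⟩ => ⟨hx.2, hxA⟩,
      fun ⟨hx, hxA⟩ => ⟨⟨AddSubmonoid.subset_closure hxA, hx⟩, hxA⟩⟩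
  rw [← hA]
  exact (hG'.inf_of_le hAL).closure_inter_eq

lemma IsFace.mem_of_neg_mem {x : Fin d → ℤ} (hG : IsFace L G) (hx : x ∈ L) (hnx : -x ∈ L) :
    x ∈ G :=
  ((hG.2 x (-x) hx hnx).mp (by simp)).1

lemma le_locSemigroup : Q ≤ locSemigroup Q F :=
  fun q hq => ⟨q, hq, 0, F.zero_mem, by simp⟩

lemma neg_mem_locSemigroup {f : Fin d → ℤ} (hf : f ∈ F) : -f ∈ locSemigroup Q F :=
  ⟨0, Q.zero_mem, f, hf, by simp⟩

lemma sub_mem_locSemigroup_iff (hFG : F ≤ G) {x f : Fin d → ℤ} (hf : f ∈ F) :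
    x - f ∈ locSemigroup G F ↔ x ∈ locSemigroup G F := by
  refine ⟨fun h => ?_, fun h => ?_⟩
  · simpa using add_mem h (le_locSemigroup (hFG hf))
  · simpa [sub_eq_add_neg] using add_mem h (neg_mem_locSemigroup hf)

lemma IsFace.mem_locSemigroup_iff (hG : IsFace Q G) (hFG : F ≤ G) {q : Fin d → ℤ}
    (hq : q ∈ Q) : q ∈ locSemigroup G F ↔ q ∈ G := by
  refine ⟨?_, fun h => le_locSemigroup h⟩
  rintro ⟨g, hg, f, hf, rfl⟩
  have hgf : g - f + f ∈ G := by simpa using hg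
  exact ((hG.2 _ f hq (hG.1 (hFG hf))).mp hgf).1

lemma IsFace.isFace_locSemigroup (hG : IsFace Q G) (hFG : F ≤ G) :
    IsFace (locSemigroup Q F) (locSemigroup G F) := by
  refine ⟨?_, ?_⟩
  · rintro _ ⟨g, hg, f, hf, rfl⟩
    exact ⟨g, hG.1 hg, f, hf, rfl⟩
  · rintro _ _ ⟨q₁, hq₁, f₁, hf₁, rfl⟩ ⟨q₂, hq₂, f₂, hf₂, rfl⟩
    rw [show q₁ - f₁ + (q₂ - f₂) = q₁ + q₂ - (f₁ + f₂) by abel,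
      sub_mem_locSemigroup_iff hFG (F.add_mem hf₁ hf₂), sub_mem_locSemigroup_iff hFG hf₁,
      sub_mem_locSemigroup_iff hFG hf₂, hG.mem_locSemigroup_iff hFG (Q.add_mem hq₁ hq₂),
      hG.mem_locSemigroup_iff hFG hq₁, hG.mem_locSemigroup_iff hFG hq₂]
    exact hG.2 q₁ q₂ hq₁ hq₂

lemma IsFace.locSemigroup_inter_eq (hG : IsFace Q G) (hFG : F ≤ G) (hAQ : A ⊆ Q) :
    (locSemigroup G F : Set _) ∩ A = (G : Set _) ∩ A := by
  ext a
  simp only [Set.mem_inter_iff, SetLike.mem_coe]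
  exact and_congr_left fun ha => hG.mem_locSemigroup_iff hFG (hAQ ha)

lemma IsFace.mem_of_mem_inverted (hG' : IsFace (locSemigroup Q F) G') (hFQ : F ≤ Q)
    {f : Fin d → ℤ} (hf : f ∈ F) : f ∈ G' :=
  hG'.mem_of_neg_mem (le_locSemigroup (hFQ hf)) (neg_mem_locSemigroup hf)

lemma IsFace.neg_mem_of_mem_inverted (hG' : IsFace (locSemigroup Q F) G') (hFQ : F ≤ Q)
    {f : Fin d → ℤ} (hf : f ∈ F) : -f ∈ G' :=
  hG'.mem_of_neg_mem (neg_mem_locSemigroup hf) (by simpa using le_locSemigroup (hFQ hf))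

lemma IsFace.locSemigroup_inf_eq (hG' : IsFace (locSemigroup Q F) G') (hFQ : F ≤ Q) :
    locSemigroup (Q ⊓ G') F = G' := by
  refine le_antisymm ?_ fun x hx => ?_
  · rintro _ ⟨g, hg, f, hf, rfl⟩
    simpa [sub_eq_add_neg] using add_mem hg.2 (hG'.neg_mem_of_mem_inverted hFQ hf)
  · obtain ⟨q, hq, f, hf, rfl⟩ := hG'.1 hx
    have hqG' : q ∈ G' := by simpa using add_mem hx (hG'.mem_of_mem_inverted hFQ hf)
    exact ⟨q, ⟨hq, hqG'⟩, f, hf, rfl⟩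

end Faces

theorem face_lattice_of_localization_general
    {d : ℕ} (A : Finset (Fin d → ℤ))
    (Q : AddSubmonoid (Fin d → ℤ)) (hQ : Q = AddSubmonoid.closure (A : Set (Fin d → ℤ)))
    (F : AddSubmonoid (Fin d → ℤ)) (hF : IsFace Q F) :
    -- the map G ↦ ℕG - ℕF sends faces of Q containing F to faces of Q - ℕF,
    -- and G ↦ ℕ(G ∩ A) is a left inverse to it
    (∀ G : AddSubmonoid (Fin d → ℤ), IsFace Q G → F ≤ G →
      IsFace (locSemigroup Q F) (locSemigroup G F) ∧
      AddSubmonoid.closure ((locSemigroup G F : Set (Fin d → ℤ)) ∩ (A : Set (Fin d → ℤ))) = G) ∧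
    -- conversely, G' ↦ ℕ(G' ∩ A) sends faces of Q - ℕF to faces of Q containing F,
    -- and G ↦ ℕG - ℕF is a left inverse to it
    (∀ G' : AddSubmonoid (Fin d → ℤ), IsFace (locSemigroup Q F) G' →
      IsFace Q (AddSubmonoid.closure ((G' : Set (Fin d → ℤ)) ∩ (A : Set (Fin d → ℤ)))) ∧
      F ≤ AddSubmonoid.closure ((G' : Set (Fin d → ℤ)) ∩ (A : Set (Fin d → ℤ))) ∧
      locSemigroup (AddSubmonoid.closure ((G' : Set (Fin d → ℤ)) ∩ (A : Set (Fin d → ℤ)))) F = G') := by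
  subst hQ
  refine ⟨fun G (hG : IsFace _ G) hFG => ⟨hG.isFace_locSemigroup hFG, ?_⟩, fun G' (hG' : IsFace _ G') => ?_⟩
  · rw [hG.locSemigroup_inter_eq hFG AddSubmonoid.subset_closure]
    exact hG.closure_inter_eq
  · rw [hG'.closure_inter_eq_inf le_locSemigroup]
    exact ⟨hG'.inf_of_le le_locSemigroup, fun f hf => ⟨hF.1 hf, hG'.mem_of_mem_inverted hF.1 hf⟩,
      hG'.locSemigroup_inf_eq hF.1⟩

theorem face_lattice_of_localization
    {d : ℕ} (A : Finset (Fin d → ℤ)) (h0 : (0 : Fin d → ℤ) ∉ A)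
    (Q : AddSubmonoid (Fin d → ℤ)) (hQ : Q = AddSubmonoid.closure (A : Set (Fin d → ℤ)))
    (F : AddSubmonoid (Fin d → ℤ)) (hF : IsFace Q F) :
    -- the map G ↦ ℕG - ℕF sends faces of Q containing F to faces of Q - ℕF,
    -- and G ↦ ℕ(G ∩ A) is a left inverse to it
    (∀ G : AddSubmonoid (Fin d → ℤ), IsFace Q G → F ≤ G →
      IsFace (locSemigroup Q F) (locSemigroup G F) ∧
      AddSubmonoid.closure ((locSemigroup G F : Set (Fin d → ℤ)) ∩ (A : Set (Fin d → ℤ))) = G) ∧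
    -- conversely, G' ↦ ℕ(G' ∩ A) sends faces of Q - ℕF to faces of Q containing F,
    -- and G ↦ ℕG - ℕF is a left inverse to it
    (∀ G' : AddSubmonoid (Fin d → ℤ), IsFace (locSemigroup Q F) G' →
      IsFace Q (AddSubmonoid.closure ((G' : Set (Fin d → ℤ)) ∩ (A : Set (Fin d → ℤ)))) ∧
      F ≤ AddSubmonoid.closure ((G' : Set (Fin d → ℤ)) ∩ (A : Set (Fin d → ℤ))) ∧
      locSemigroup (AddSubmonoid.closure ((G' : Set (Fin d → ℤ)) ∩ (A : Set (Fin d → ℤ)))) F = G') :=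
  face_lattice_of_localization_general A Q hQ F hF

end
end
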